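/- (Informative outliers certify correctness, geometric core of Lemma 1) Let $U$ be a distribution on the sphere $S = \{x \in \mathbb{R}^d : \|x - \mu\|_2 = \sigma_o\sqrt{d}\}$ whose density is at least $\eta > 0$ times that of the uniform distribution on $S$. Fix $B > 0$ and $t > 0$ with $\sigma_o^2 d - B^2 \le t^2$. Then for any point $p \in \mathbb{R}^d$ with $\|p - \mu\|_2 \ge B$, the probability that a sample $\tilde{x} \sim U$ satisfies $\|\tilde{x} - p\|_2 < t$ is at least $\eta \cdot \frac{A_d(1 - \|p-\mu\|_2/(\sigma_o\sqrt{d}))}{A_d}$, where $A_d(v)$ is the area of the spherical cap of the unit hypersphere in $\mathbb{R}^d$ with height $v$ and $A_d$ is the total sphere area. -/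

import Mathlib

open MeasureTheory
open scoped RealInnerProductSpace ENNReal

/-!
On the sphere `‖x - c‖ = r` one has `‖x - p‖² = r² + ‖p - c‖² - 2⟪x - c, p - c⟫`, so every point
of the cap `‖p - c‖² ≤ ⟪x - c, p - c⟫` is within `√(r² - ‖p - c‖²) ≤ t` of `p`, and it can miss
the open ball only on the hyperplane `⟪x - c, p - c⟫ = ‖p - c‖²`. That hyperplane is null for a
finite rotation-invariant measure: its rotations about `c` inside a plane are infinitely many
hyperplanes of equal measure, tangent to a circle, and since a point lies on at most two tangents
of a circle, their measures add up to at most twice the total mass.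
-/

theorem measure_eq_zero_of_bounded_overlap {α : Type*} [MeasurableSpace α] (μ : Measure α)
    [IsFiniteMeasure μ] {S : ℕ → Set α} (hS : ∀ k, MeasurableSet (S k))
    (hμS : ∀ k, μ (S k) = μ (S 0)) (m : ℕ)
    (hcard : ∀ x (s : Finset ℕ), (∀ k ∈ s, x ∈ S k) → s.card ≤ m) :
    μ (S 0) = 0 := by
  classical
  have hsum (n : ℕ) : n * μ (S 0) ≤ m * μ Set.univ :=
    calc (n : ℝ≥0∞) * μ (S 0) = ∑ k ∈ Finset.range n, μ (S k) := by simp [hμS]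
      _ = ∫⁻ x, ∑ k ∈ Finset.range n, (S k).indicator 1 x ∂μ := by
        rw [lintegral_finsetSum _ fun k _ => measurable_one.indicator (hS k)]
        simp only [lintegral_indicator_one (hS _)]
      _ ≤ ∫⁻ _, (m : ℝ≥0∞) ∂μ := lintegral_mono fun x => by
        simp only [Set.indicator_apply, Pi.one_apply, Finset.sum_boole]
        exact_mod_cast hcard x _ fun k hk => (Finset.mem_filter.1 hk).2
      _ = m * μ Set.univ := lintegral_const _
  by_contra h
  obtain ⟨n, hn⟩ := ENNReal.exists_nat_mul_gt h (by finiteness : (m : ℝ≥0∞) * μ Set.univ ≠ ⊤)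
  exact (hsum n).not_gt hn

section InnerProductSpace

variable {E : Type*} [NormedAddCommGroup E] [InnerProductSpace ℝ E]

/-- The inverse stereographic parametrization of the circle through `v` in the plane of `v, w`,
when `v ⊥ w` and `‖v‖ = ‖w‖`. -/
noncomputable def rationalCirclePoint (v w : E) (k : ℝ) : E :=
  (1 + k ^ 2)⁻¹ • ((1 - k ^ 2) • v + (2 * k) • w)

@[simp]
theorem rationalCirclePoint_zero (v w : E) : rationalCirclePoint v w 0 = v := by
  simp [rationalCirclePoint]

theorem norm_rationalCirclePoint {v w : E} (hvw : ⟪v, w⟫ = 0) (hnorm : ‖w‖ = ‖v‖) (k : ℝ) :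
    ‖rationalCirclePoint v w k‖ = ‖v‖ := by
  have hpos : 0 < 1 + k ^ 2 := by positivity
  have hsq : ‖(1 - k ^ 2) • v + (2 * k) • w‖ ^ 2 = ((1 + k ^ 2) * ‖v‖) ^ 2 := by
    rw [norm_add_sq_real, real_inner_smul_left, real_inner_smul_right, hvw, norm_smul,
      norm_smul, hnorm, Real.norm_eq_abs, Real.norm_eq_abs, mul_pow, mul_pow, sq_abs, sq_abs]
    ring
  rw [rationalCirclePoint, norm_smul, norm_inv, Real.norm_of_nonneg hpos.le,
    (sq_eq_sq₀ (norm_nonneg _) (by positivity)).1 hsq]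
  field_simp

/-- A point lies on at most two tangent lines to a circle of nonzero radius. -/
theorem card_le_two_of_inner_rationalCirclePoint_eq {y v w : E} {a : ℝ} (ha : a ≠ 0)
    {s : Finset ℕ} (hs : ∀ k ∈ s, ⟪y, rationalCirclePoint v w k⟫ = a) : s.card ≤ 2 := by
  open Polynomial in
  set q : ℝ[X] := C (-⟪y, v⟫ - a) * X ^ 2 + C (2 * ⟪y, w⟫) * X + C (⟪y, v⟫ - a)
  have hroot (k : s) : q.eval ((k : ℕ) : ℝ) = 0 := by
    have hk := hs k k.2
    have hpos : 0 < 1 + ((k : ℕ) : ℝ) ^ 2 := by positivity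
    simp only [rationalCirclePoint, real_inner_smul_right, inner_add_right] at hk
    field_simp at hk
    simp only [q, eval_add, eval_mul, eval_pow, eval_C, eval_X]
    linear_combination hk
  by_contra! hcard
  have hq := eq_zero_of_natDegree_lt_card_of_eval_eq_zero q
    (Nat.cast_injective.comp Subtype.val_injective) hroot
    (natDegree_quadratic_le.trans_lt (by simpa using hcard))
  have h0 := congrArg (coeff · 0) hq
  have h2 := congrArg (coeff · 2) hq
  simp only [q, coeff_add, coeff_C_mul, coeff_X_pow, coeff_X, coeff_C] at h0 h2
  norm_num at h0 h2
  exact ha (by linarith)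

theorem inner_sub_eq_norm_sq_of_le_norm_sub {c p x : E} {t : ℝ} (ht : 0 ≤ t)
    (hx : ‖x - c‖ ^ 2 - ‖p - c‖ ^ 2 ≤ t ^ 2) (hcap : ‖p - c‖ ^ 2 ≤ ⟪x - c, p - c⟫)
    (hball : t ≤ ‖x - p‖) : ⟪x - c, p - c⟫ = ‖p - c‖ ^ 2 := by
  have hdist : ‖x - p‖ ^ 2 = ‖x - c‖ ^ 2 - 2 * ⟪x - c, p - c⟫ + ‖p - c‖ ^ 2 := by
    rw [← norm_sub_sq_real, sub_sub_sub_cancel_right]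
  nlinarith [pow_le_pow_left₀ ht hball 2]

variable [MeasurableSpace E] [BorelSpace E] {μ : Measure E} {c : E}

theorem measurableSet_inner_sub_eq (c u : E) (a : ℝ) : MeasurableSet {x : E | ⟪x - c, u⟫ = a} :=
  (isClosed_eq (by fun_prop) continuous_const).measurableSet

theorem measure_inner_sub_eq_of_norm_eq
    (hμ : ∀ O : E ≃ₗᵢ[ℝ] E, μ.map (fun x => c + O (x - c)) = μ) {u v : E} (huv : ‖u‖ = ‖v‖)
    (a : ℝ) : μ {x | ⟪x - c, v⟫ = a} = μ {x | ⟪x - c, u⟫ = a} := by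
  set O := (ℝ ∙ (u - v))ᗮ.reflection
  have hOu : O u = v := Submodule.reflection_sub huv
  calc μ {x | ⟪x - c, v⟫ = a} = μ.map (fun x => c + O (x - c)) {x | ⟪x - c, v⟫ = a} := by
        rw [hμ O]
    _ = μ {x | ⟪x - c, u⟫ = a} := by
        rw [Measure.map_apply (by fun_prop) (measurableSet_inner_sub_eq c v a), ← hOu]
        simp only [Set.preimage_ofPred_eq, add_sub_cancel_left, LinearIsometryEquiv.inner_map_map]

theorem measure_inner_sub_eq_eq_zero [IsFiniteMeasure μ]
    (hμ : ∀ O : E ≃ₗᵢ[ℝ] E, μ.map (fun x => c + O (x - c)) = μ) {v w : E} (hw : w ≠ 0)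
    (hvw : ⟪v, w⟫ = 0) {a : ℝ} (ha : a ≠ 0) : μ {x | ⟪x - c, v⟫ = a} = 0 := by
  set w' := (‖v‖ / ‖w‖) • w
  have hvw' : ⟪v, w'⟫ = 0 := by simp [w', real_inner_smul_right, hvw]
  have hnorm : ‖w'‖ = ‖v‖ := by
    simp [w', norm_smul, norm_ne_zero_iff.2 hw]
  simpa using measure_eq_zero_of_bounded_overlap μ
    (S := fun k : ℕ => {x | ⟪x - c, rationalCirclePoint v w' k⟫ = a})
    (fun k => measurableSet_inner_sub_eq c _ a)
    (fun k => measure_inner_sub_eq_of_norm_eq hμ (by simp [norm_rationalCirclePoint hvw' hnorm]) a)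
    2
    (fun x s hs => card_le_two_of_inner_rationalCirclePoint_eq ha hs)

theorem measure_cap_diff_ball_eq_zero [IsFiniteMeasure μ]
    (hμ : ∀ O : E ≃ₗᵢ[ℝ] E, μ.map (fun x => c + O (x - c)) = μ) {p : E} (hp : p ≠ c)
    {t : ℝ} (ht : 0 < t) (hsupp : ∀ᵐ x ∂μ, ‖x - c‖ ^ 2 - ‖p - c‖ ^ 2 ≤ t ^ 2) :
    μ ({x | ‖p - c‖ ^ 2 ≤ ⟪x - c, p - c⟫} \ {x | ‖x - p‖ < t}) = 0 := by
  have hslice : ∀ᵐ x ∂μ, x ∈ {x | ‖p - c‖ ^ 2 ≤ ⟪x - c, p - c⟫} \ {x | ‖x - p‖ < t} →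
      x ∈ {x | ⟪x - c, p - c⟫ = ‖p - c‖ ^ 2} :=
    hsupp.mono fun x hx ⟨hcap, hball⟩ =>
      inner_sub_eq_norm_sq_of_le_norm_sub ht.le hx hcap (not_lt.1 hball)
  by_contra hpos
  obtain ⟨x₀, hx₀, hx₀slice⟩ := ((frequently_ae_mem_iff.2 hpos).and_eventually hslice).exists
  have hball : t ≤ ‖x₀ - p‖ := not_lt.1 hx₀.2
  have hinner : ⟪x₀ - c, p - c⟫ = ‖p - c‖ ^ 2 := hx₀slice hx₀
  have horth : ⟪p - c, x₀ - p⟫ = 0 := by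
    rw [← sub_sub_sub_cancel_right x₀ p c, inner_sub_right, real_inner_comm, hinner,
      real_inner_self_eq_norm_sq, sub_self]
  have hx₀p : x₀ - p ≠ 0 := norm_pos_iff.1 (ht.trans_le hball)
  exact hpos (measure_mono_null_ae hslice (measure_inner_sub_eq_eq_zero hμ hx₀p horth
    (pow_ne_zero 2 (norm_ne_zero_iff.2 (sub_ne_zero.2 hp)))))

end InnerProductSpace

theorem informative_outliers_cap_bound_general
    (d : ℕ) (μc p : EuclideanSpace ℝ (Fin d)) (σo η B t : ℝ)
    (U μU : Measure (EuclideanSpace ℝ (Fin d)))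
    (hB : 0 < B) (ht : 0 < t)
    [IsProbabilityMeasure μU]
    (hμUsphere : ∀ᵐ x ∂μU, ‖x - μc‖ = σo * Real.sqrt d)
    (hμUunif : ∀ O : EuclideanSpace ℝ (Fin d) ≃ₗᵢ[ℝ] EuclideanSpace ℝ (Fin d),
      Measure.map (fun x => μc + O (x - μc)) μU = μU)
    (hdens : ∀ A : Set (EuclideanSpace ℝ (Fin d)), MeasurableSet A →
      ENNReal.ofReal η * μU A ≤ U A)
    (htB : σo ^ 2 * d - B ^ 2 ≤ t ^ 2) (hpB : B ≤ ‖p - μc‖) :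
    ENNReal.ofReal η * μU {x | ‖p - μc‖ ^ 2 ≤ ⟪x - μc, p - μc⟫} ≤
      U {x | ‖x - p‖ < t} := by
  have hp : p ≠ μc := sub_ne_zero.1 (norm_pos_iff.1 (hB.trans_le hpB))
  have hsupp : ∀ᵐ x ∂μU, ‖x - μc‖ ^ 2 - ‖p - μc‖ ^ 2 ≤ t ^ 2 := hμUsphere.mono fun x hx => by
    rw [hx, mul_pow, Real.sq_sqrt d.cast_nonneg]
    nlinarith
  set cap := {x | ‖p - μc‖ ^ 2 ≤ ⟪x - μc, p - μc⟫}
  set ball := {x : EuclideanSpace ℝ (Fin d) | ‖x - p‖ < t}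
  have hnull : μU (cap \ ball) = 0 := measure_cap_diff_ball_eq_zero hμUunif hp ht hsupp
  have hcap : μU cap ≤ μU (cap ∩ ball) :=
    (measure_le_inter_add_sdiff μU cap ball).trans_eq (by rw [hnull, add_zero])
  have hmeas : MeasurableSet (cap ∩ ball) :=
    (measurableSet_le (by fun_prop) (by fun_prop)).inter
      (measurableSet_lt (by fun_prop) (by fun_prop))
  calc ENNReal.ofReal η * μU cap ≤ ENNReal.ofReal η * μU (cap ∩ ball) := by gcongr
    _ ≤ U (cap ∩ ball) := hdens _ hmeas
    _ ≤ U ball := measure_mono Set.inter_subset_right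

/-- informative outliers certify correctness. If `U` has density at
least `η` times the uniform measure `μU` on the sphere of radius `σo√d` around
`μc`, `σo²d - B² ≤ t²` and `‖p - μc‖ ≥ B`, then the `U`-probability of the open
ball of radius `t` around `p` is at least `η` times the uniform measure of the
spherical cap `{x : ⟪x - μc, p - μc⟫ ≥ ‖p - μc‖²}` (the cap of height
`1 - ‖p-μc‖/(σo√d)`). -/
theorem informative_outliers_cap_bound
    (d : ℕ) (μc p : EuclideanSpace ℝ (Fin d)) (σo η B t : ℝ)
    (U μU : Measure (EuclideanSpace ℝ (Fin d)))
    (hd : 0 < d) (hσo : 0 < σo) (hη : 0 < η) (hB : 0 < B) (ht : 0 < t)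
    [IsProbabilityMeasure U] [IsProbabilityMeasure μU]
    (hUsphere : ∀ᵐ x ∂U, ‖x - μc‖ = σo * Real.sqrt d)
    (hμUsphere : ∀ᵐ x ∂μU, ‖x - μc‖ = σo * Real.sqrt d)
    (hμUunif : ∀ O : EuclideanSpace ℝ (Fin d) ≃ₗᵢ[ℝ] EuclideanSpace ℝ (Fin d),
      Measure.map (fun x => μc + O (x - μc)) μU = μU)
    (hdens : ∀ A : Set (EuclideanSpace ℝ (Fin d)), MeasurableSet A →
      ENNReal.ofReal η * μU A ≤ U A)
    (htB : σo ^ 2 * d - B ^ 2 ≤ t ^ 2) (hpB : B ≤ ‖p - μc‖) :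
    ENNReal.ofReal η * μU {x | ‖p - μc‖ ^ 2 ≤ ⟪x - μc, p - μc⟫} ≤
      U {x | ‖x - p‖ < t} :=
  informative_outliers_cap_bound_general d μc p σo η B t U μU hB ht hμUsphere hμUunif hdens htB hpB
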